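/- For a connected simple graph G with maximum degree Δ(G), the edge metric dimension satisfies β_E(G) ≥ ⌈log₂ Δ(G)⌉. -/

import Mathlib

open SimpleGraph

/-- Distance from a vertex `w` to an edge `e` (as a `Sym2`). -/
noncomputable def edist {V : Type*} (G : SimpleGraph V) (w : V) (e : Sym2 V) : Nat :=
  Sym2.lift ⟨fun u v => min (G.dist w u) (G.dist w v), fun u v => min_comm _ _⟩ e

/-- `S` is a mixed resolving set: every two distinct elements of `V ∪ E`
are distinguished by the distance to some vertex of `S`. -/
def MixedResolvingSet {V : Type*} (G : SimpleGraph V) (S : Set V) : Prop :=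
  (∀ u v : V, u ≠ v → ∃ w ∈ S, G.dist w u ≠ G.dist w v) ∧
  (∀ e ∈ G.edgeSet, ∀ f ∈ G.edgeSet, e ≠ f → ∃ w ∈ S, edist G w e ≠ edist G w f) ∧
  (∀ u : V, ∀ e ∈ G.edgeSet, ∃ w ∈ S, G.dist w u ≠ edist G w e)

/-- The mixed metric dimension of `G`. -/
noncomputable def mixedDim {V : Type*} (G : SimpleGraph V) : Nat :=
  sInf {n | ∃ S : Set V, MixedResolvingSet G S ∧ S.ncard = n}

/-- `S` resolves all pairs of vertices. -/
def ResolvingSet {V : Type*} (G : SimpleGraph V) (S : Set V) : Prop :=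
  ∀ u v : V, u ≠ v → ∃ w ∈ S, G.dist w u ≠ G.dist w v

/-- `S` resolves all pairs of edges. -/
def EdgeResolvingSet {V : Type*} (G : SimpleGraph V) (S : Set V) : Prop :=
  ∀ e ∈ G.edgeSet, ∀ f ∈ G.edgeSet, e ≠ f → ∃ w ∈ S, edist G w e ≠ edist G w f

/-- The metric dimension of `G`. -/
noncomputable def metricDim {V : Type*} (G : SimpleGraph V) : Nat :=
  sInf {n | ∃ S : Set V, ResolvingSet G S ∧ S.ncard = n}

/-- The edge metric dimension of `G`. -/
noncomputable def edgeDim {V : Type*} (G : SimpleGraph V) : Nat :=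
  sInf {n | ∃ S : Set V, EdgeResolvingSet G S ∧ S.ncard = n}

/-!
A vertex `w` at distance `d` from `v` lies at distance `d - 1`, `d` or `d + 1` from each neighbour
`u` of `v`, so `d(w, vu)` is `d - 1` or `d` according as `u` is closer to `w` than `v` or not.
Hence the edges at `v` are told apart by `S` only through the subset of `S` consisting of the
vertices to which `u` is closer than `v`; for an edge resolving `S` this gives `deg v ≤ 2 ^ |S|`.
-/

section

variable {V : Type*} {G : SimpleGraph V}

lemma edist_mk (w u v : V) : edist G w s(u, v) = min (G.dist w u) (G.dist w v) := rfl

lemma edist_eq_zero_iff (hG : G.Connected) {w : V} {e : Sym2 V} :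
    edist G w e = 0 ↔ w ∈ e := by
  induction e using Sym2.ind with
  | _ u v => simp [edist_mk, hG.dist_eq_zero_iff]

lemma edgeResolvingSet_univ (hG : G.Connected) : EdgeResolvingSet G Set.univ := by
  intro e _ f _ hef
  obtain ⟨x, hx⟩ : ∃ x, ¬(x ∈ e ↔ x ∈ f) := by simpa [Sym2.ext_iff] using hef
  exact ⟨x, trivial, fun h => hx (by rw [← edist_eq_zero_iff hG, h, edist_eq_zero_iff hG])⟩

lemma exists_edgeResolvingSet_ncard_eq_edgeDim (hG : G.Connected) :
    ∃ S : Set V, EdgeResolvingSet G S ∧ S.ncard = edgeDim G :=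
  Nat.sInf_mem (s := {n | ∃ S : Set V, EdgeResolvingSet G S ∧ S.ncard = n})
    ⟨_, Set.univ, edgeResolvingSet_univ hG, rfl⟩

lemma edist_of_adj (hG : G.Connected) {v u : V} (h : G.Adj v u) (w : V) :
    edist G w s(v, u) = if G.dist w u < G.dist w v then G.dist w v - 1 else G.dist w v := by
  have htri : G.dist w v ≤ G.dist w u + G.dist u v := hG.dist_triangle
  rw [dist_eq_one_iff_adj.mpr h.symm] at htri
  rw [edist_mk]
  split_ifs <;> omega

lemma EdgeResolvingSet.degree_le_two_pow [Fintype V] [DecidableRel G.Adj] (hG : G.Connected)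
    {S : Finset V} (hS : EdgeResolvingSet G S) (v : V) : G.degree v ≤ 2 ^ S.card := by
  rw [← card_neighborFinset_eq_degree, ← Finset.card_powerset]
  refine Finset.card_le_card_of_injOn (fun u => {w ∈ S | G.dist w u < G.dist w v})
    (fun u _ => Finset.mem_powerset.mpr (Finset.filter_subset _ _)) ?_
  intro u₁ hu₁ u₂ hu₂ hcloser
  rw [Finset.mem_coe, mem_neighborFinset] at hu₁ hu₂
  by_contra hne
  obtain ⟨w, hw, hdiff⟩ := hS _ hu₁ _ hu₂ (fun h => hne (Sym2.congr_right.mp h))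
  have hiff : G.dist w u₁ < G.dist w v ↔ G.dist w u₂ < G.dist w v := by
    simpa [Finset.mem_coe.mp hw] using Finset.ext_iff.mp hcloser w
  simp only [edist_of_adj hG hu₁, edist_of_adj hG hu₂, hiff] at hdiff
  exact hdiff rfl

end

theorem stmt_15 {V : Type*} [Fintype V] (G : SimpleGraph V) [DecidableRel G.Adj]
    (hG : G.Connected) :
    edgeDim G ≥ Nat.clog 2 G.maxDegree := by
  obtain ⟨S, hS, hcard⟩ := exists_edgeResolvingSet_ncard_eq_edgeDim hG
  obtain ⟨S, rfl⟩ := S.toFinite.exists_finset_coe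
  rw [Set.ncard_coe_finset] at hcard
  rw [ge_iff_le, Nat.clog_le_iff_le_pow one_lt_two, ← hcard]
  exact G.maxDegree_le_of_forall_degree_le _ (hS.degree_le_two_pow hG)
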